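/- arXiv:2301.11866 — 3 statements merged into one kernel-verified Lean document; each statement's English description precedes it below -/
import Mathlib

section
/- Let X and Y be nonempty Stone spaces (nonempty, compact, Hausdorff, totally disconnected topological spaces) and define the map ψ : LocallyConstant(X,ℝ) × LocallyConstant(Y,ℝ) → LocallyConstant(X×Y,ℝ) by ψ(f,g)(x,y) = f(x)·g(y). Then ψ is a Riesz bimorphism, and the pair (LocallyConstant(X×Y,ℝ), ψ) has the universal property of the Archimedean Riesz space tensor product: for every Archimedean Riesz space H and every Riesz bimorphism φ : LocallyConstant(X,ℝ) × LocallyConstant(Y,ℝ) → H there exists a unique Riesz homomorphism T : LocallyConstant(X×Y,ℝ) → H such that T ∘ ψ = φ. (This realizes the paper's main theorem: the Carathéodory space of place functions on the free product A ⊗ B of two Boolean algebras is Riesz isomorphic to the Fremlin–Archimedean Riesz space tensor product C(A) ⊗̄ C(B).) -/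
/-!
Curry `h : LocallyConstant (X × Y) ℝ` to `x ↦ h (x, ·)`. By the tube lemma (compactness of `Y`) this
is a locally constant map `X → LocallyConstant Y ℝ`, so by compactness of `X` it takes finitely many
values `k` on clopen sets `U_k` partitioning `X`. Hence `h = ∑ₖ ψ(1_{U_k}, k)` and
`h⁺ = ∑ₖ ψ(1_{U_k}, k⁺)`. With a basis argument for injectivity, `ψ` induces a linear isomorphism
`LC(X) ⊗ LC(Y) ≃ LC(X × Y)`, so a bilinear `φ` factors uniquely through a linear `T`. If `φ` is a
Riesz bimorphism, the elements `φ(1_{U_k}, k)` are pairwise disjoint because the `U_k` are, and the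
positive part of a sum of pairwise disjoint elements of a lattice-ordered group is the sum of their
positive parts; so `T` commutes with `(·)⁺`, i.e. it is a Riesz homomorphism.
-/

open TopologicalSpace

universe u

noncomputable instance {X : Type*} [TopologicalSpace X] : Max (LocallyConstant X ℝ) :=
  ⟨fun f g => ⟨fun x => max (f x) (g x), f.isLocallyConstant.comp₂ g.isLocallyConstant max⟩⟩

noncomputable instance {X : Type*} [TopologicalSpace X] : Min (LocallyConstant X ℝ) :=
  ⟨fun f g => ⟨fun x => min (f x) (g x), f.isLocallyConstant.comp₂ g.isLocallyConstant min⟩⟩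

instance {X : Type*} [TopologicalSpace X] : LE (LocallyConstant X ℝ) :=
  ⟨fun f g => (f : X → ℝ) ≤ (g : X → ℝ)⟩

instance {X : Type*} [TopologicalSpace X] : LT (LocallyConstant X ℝ) :=
  ⟨fun f g => (f : X → ℝ) < (g : X → ℝ)⟩

/-- The pointwise lattice structure on locally constant real functions. -/
noncomputable instance {X : Type*} [TopologicalSpace X] : Lattice (LocallyConstant X ℝ) :=
  Function.Injective.lattice (fun f : LocallyConstant X ℝ => (f : X → ℝ)) DFunLike.coe_injective
    Iff.rfl Iff.rfl (fun _ _ => rfl) (fun _ _ => rfl)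

/-- `ψ(f,g)(x,y) = f(x) * g(y)`. -/
noncomputable def psi {X Y : Type*} [TopologicalSpace X] [TopologicalSpace Y]
    (f : LocallyConstant X ℝ) (g : LocallyConstant Y ℝ) : LocallyConstant (X × Y) ℝ :=
  ⟨fun p => f p.1 * g p.2,
    (f.isLocallyConstant.comp_continuous continuous_fst).mul
      (g.isLocallyConstant.comp_continuous continuous_snd)⟩

open scoped TensorProduct

section LatticeOrderedGroup

variable {H : Type*} [AddCommGroup H] [Lattice H] [AddLeftMono H]

lemma add_inf_le_inf_add_inf {x y z : H} (hx : 0 ≤ x) (hy : 0 ≤ y) (hz : 0 ≤ z) :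
    (x + y) ⊓ z ≤ x ⊓ z + y ⊓ z := by
  rw [← sub_le_iff_le_add', sub_inf x z ((x + y) ⊓ z)]
  apply sup_le
  · exact le_inf (sub_le_iff_le_add.2 (inf_le_left.trans (by rw [add_comm])))
      (sub_le_iff_le_add.2 (inf_le_right.trans (le_add_of_nonneg_right hx)))
  · exact le_inf ((sub_nonpos.2 inf_le_right).trans hy) ((sub_nonpos.2 inf_le_right).trans hz)

lemma add_inf_eq_zero {x y z : H} (hx : 0 ≤ x) (hy : 0 ≤ y) (hz : 0 ≤ z) (hxz : x ⊓ z = 0)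
    (hyz : y ⊓ z = 0) : (x + y) ⊓ z = 0 :=
  le_antisymm (by simpa [hxz, hyz] using add_inf_le_inf_add_inf hx hy hz)
    (le_inf (add_nonneg hx hy) hz)

lemma Finset.sum_inf_eq_zero {ι : Type*} {s : Finset ι} {x : ι → H} {z : H} (hz : 0 ≤ z)
    (hx : ∀ k ∈ s, 0 ≤ x k) (hxz : ∀ k ∈ s, x k ⊓ z = 0) : (∑ k ∈ s, x k) ⊓ z = 0 :=
  (Finset.sum_induction x (fun w => 0 ≤ w ∧ w ⊓ z = 0)
    (fun _ _ ha hb => ⟨add_nonneg ha.1 hb.1, add_inf_eq_zero ha.1 hb.1 hz ha.2 hb.2⟩)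
    ⟨le_rfl, inf_eq_left.2 hz⟩ fun k hk => ⟨hx k hk, hxz k hk⟩).2

lemma posPart_sub_of_inf_eq_zero {a b : H} (h : a ⊓ b = 0) : (a - b)⁺ = a := by
  have hsup : a ⊔ b = a + b := by rw [← inf_add_sup a b, h, zero_add]
  have := sup_eq_add_posPart_sub a b
  rw [hsup, add_comm] at this
  exact (add_left_cancel this).symm

lemma posPart_sum_of_pairwise_abs_inf_eq_zero {ι : Type*} (s : Finset ι) (a : ι → H)
    (hs : (s : Set ι).Pairwise fun k l => |a k| ⊓ |a l| = 0) :
    (∑ k ∈ s, a k)⁺ = ∑ k ∈ s, (a k)⁺ := by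
  have hcross : ∀ k ∈ s, ∀ l ∈ s, (a k)⁺ ⊓ (a l)⁻ = 0 := by
    intro k hk l hl
    rcases eq_or_ne k l with rfl | hkl
    · exact posPart_inf_negPart_eq_zero (a k)
    · refine le_antisymm ?_ (le_inf (posPart_nonneg _) (negPart_nonneg _))
      exact (inf_le_inf (sup_le (le_abs_self _) (abs_nonneg _))
        (sup_le (neg_le_abs _) (abs_nonneg _))).trans (hs hk hl hkl).le
  have hdisj : (∑ k ∈ s, (a k)⁺) ⊓ ∑ l ∈ s, (a l)⁻ = 0 := by
    refine Finset.sum_inf_eq_zero (Finset.sum_nonneg fun l _ => negPart_nonneg _)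
      (fun k _ => posPart_nonneg _) fun k hk => ?_
    rw [inf_comm]
    exact Finset.sum_inf_eq_zero (posPart_nonneg _) (fun l _ => negPart_nonneg _)
      fun l hl => by rw [inf_comm]; exact hcross k hk l hl
  calc (∑ k ∈ s, a k)⁺ = (∑ k ∈ s, (a k)⁺ - ∑ k ∈ s, (a k)⁻)⁺ := by
        simp only [← Finset.sum_sub_distrib, posPart_sub_negPart]
    _ = ∑ k ∈ s, (a k)⁺ := posPart_sub_of_inf_eq_zero hdisj

lemma map_sup_of_map_posPart {H' F : Type*} [AddCommGroup H'] [Lattice H'] [AddLeftMono H']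
    [FunLike F H H'] [AddMonoidHomClass F H H'] (T : F) (hT : ∀ a, T a⁺ = (T a)⁺) (a b : H) :
    T (a ⊔ b) = T a ⊔ T b := by
  rw [sup_eq_add_posPart_sub, map_add, hT, map_sub, ← sup_eq_add_posPart_sub]

end LatticeOrderedGroup

section RieszBimorphism

variable {E F G : Type*} [AddCommGroup E] [Lattice E] [Module ℝ E]
  [AddCommGroup F] [Lattice F] [Module ℝ F] [AddCommGroup G] [Lattice G] [Module ℝ G]

structure IsRieszBimorphism (φ : E →ₗ[ℝ] F →ₗ[ℝ] G) : Prop where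
  map_sup_left : ∀ g, 0 ≤ g → ∀ f₁ f₂, φ (f₁ ⊔ f₂) g = φ f₁ g ⊔ φ f₂ g
  map_sup_right : ∀ f, 0 ≤ f → ∀ g₁ g₂, φ f (g₁ ⊔ g₂) = φ f g₁ ⊔ φ f g₂

namespace IsRieszBimorphism

variable {φ : E →ₗ[ℝ] F →ₗ[ℝ] G}

lemma map_posPart_right (hφ : IsRieszBimorphism φ) {f : E} (hf : 0 ≤ f) (g : F) :
    φ f g⁺ = (φ f g)⁺ := by
  rw [posPart_def, hφ.map_sup_right f hf, map_zero, posPart_def]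

lemma map_abs_right (hφ : IsRieszBimorphism φ) {f : E} (hf : 0 ≤ f) (g : F) :
    φ f |g| = |φ f g| := by
  simp only [abs, hφ.map_sup_right f hf, map_neg]

lemma monotone_right (hφ : IsRieszBimorphism φ) {f : E} (hf : 0 ≤ f) : Monotone (φ f) :=
  fun g₁ g₂ hg => by
    rw [← sup_eq_right.2 hg, hφ.map_sup_right f hf]
    exact le_sup_left

lemma map_inf_left [AddLeftMono E] [AddLeftMono G] (hφ : IsRieszBimorphism φ) {g : F}
    (hg : 0 ≤ g) (f₁ f₂ : E) : φ (f₁ ⊓ f₂) g = φ f₁ g ⊓ φ f₂ g := by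
  rw [eq_sub_of_add_eq (inf_add_sup f₁ f₂), map_sub, map_add, LinearMap.sub_apply,
    LinearMap.add_apply, hφ.map_sup_left g hg]
  exact (eq_sub_of_add_eq (inf_add_sup _ _)).symm

lemma abs_inf_abs_eq_zero [AddLeftMono E] [AddLeftMono F] [AddLeftMono G]
    (hφ : IsRieszBimorphism φ) {f₁ f₂ : E} (hf₁ : 0 ≤ f₁) (hf₂ : 0 ≤ f₂) (hf : f₁ ⊓ f₂ = 0)
    (g₁ g₂ : F) : |φ f₁ g₁| ⊓ |φ f₂ g₂| = 0 := by
  refine le_antisymm ?_ (le_inf (abs_nonneg _) (abs_nonneg _))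
  calc |φ f₁ g₁| ⊓ |φ f₂ g₂| = φ f₁ |g₁| ⊓ φ f₂ |g₂| := by
        rw [hφ.map_abs_right hf₁, hφ.map_abs_right hf₂]
    _ ≤ φ f₁ (|g₁| ⊔ |g₂|) ⊓ φ f₂ (|g₁| ⊔ |g₂|) :=
        inf_le_inf (hφ.monotone_right hf₁ le_sup_left) (hφ.monotone_right hf₂ le_sup_right)
    _ = 0 := by
        rw [← hφ.map_inf_left ((abs_nonneg g₁).trans le_sup_left), hf, map_zero,
          LinearMap.zero_apply]

end IsRieszBimorphism

end RieszBimorphism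

@[simp] lemma LocallyConstant.sum_apply {X M ι : Type*} [TopologicalSpace X] [AddCommMonoid M]
    (s : Finset ι) (f : ι → LocallyConstant X M) (x : X) :
    (∑ i ∈ s, f i) x = ∑ i ∈ s, f i x := by
  simpa using congrFun (map_sum LocallyConstant.coeFnAddMonoidHom f s) x

instance {X : Type*} [TopologicalSpace X] : AddLeftMono (LocallyConstant X ℝ) :=
  ⟨fun f _ _ h x => add_le_add_right (h x) (f x)⟩

section Psi

variable {X Y : Type*} [TopologicalSpace X] [TopologicalSpace Y]

@[simp] lemma psi_apply (f : LocallyConstant X ℝ) (g : LocallyConstant Y ℝ) (p : X × Y) :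
    psi f g p = f p.1 * g p.2 :=
  rfl

lemma psi_add_left (f₁ f₂ : LocallyConstant X ℝ) (g : LocallyConstant Y ℝ) :
    psi (f₁ + f₂) g = psi f₁ g + psi f₂ g :=
  LocallyConstant.ext fun _ => add_mul _ _ _

lemma psi_smul_left (c : ℝ) (f : LocallyConstant X ℝ) (g : LocallyConstant Y ℝ) :
    psi (c • f) g = c • psi f g :=
  LocallyConstant.ext fun _ => mul_assoc _ _ _

lemma psi_add_right (f : LocallyConstant X ℝ) (g₁ g₂ : LocallyConstant Y ℝ) :
    psi f (g₁ + g₂) = psi f g₁ + psi f g₂ :=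
  LocallyConstant.ext fun _ => mul_add _ _ _

lemma psi_smul_right (c : ℝ) (f : LocallyConstant X ℝ) (g : LocallyConstant Y ℝ) :
    psi f (c • g) = c • psi f g :=
  LocallyConstant.ext fun _ => mul_left_comm _ _ _

variable (X Y) in
noncomputable def psiₗ :
    LocallyConstant X ℝ →ₗ[ℝ] LocallyConstant Y ℝ →ₗ[ℝ] LocallyConstant (X × Y) ℝ :=
  LinearMap.mk₂ ℝ psi psi_add_left psi_smul_left psi_add_right psi_smul_right

lemma isRieszBimorphism_psiₗ : IsRieszBimorphism (psiₗ X Y) where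
  map_sup_left _ hg _ _ := LocallyConstant.ext fun p => max_mul_of_nonneg _ _ (hg p.2)
  map_sup_right _ hf _ _ := LocallyConstant.ext fun p => mul_max_of_nonneg _ _ (hf p.1)

variable (X Y) in
noncomputable def psiTensor :
    LocallyConstant X ℝ ⊗[ℝ] LocallyConstant Y ℝ →ₗ[ℝ] LocallyConstant (X × Y) ℝ :=
  TensorProduct.lift (psiₗ X Y)

lemma psiTensor_tmul (f : LocallyConstant X ℝ) (g : LocallyConstant Y ℝ) :
    psiTensor X Y (f ⊗ₜ g) = psi f g :=
  rfl

lemma psiTensor_injective : Function.Injective (psiTensor X Y) := by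
  let b := Module.Basis.ofVectorSpace ℝ (LocallyConstant X ℝ)
  refine (injective_iff_map_eq_zero _).2 fun t ht => ?_
  obtain ⟨c, rfl⟩ := TensorProduct.eq_repr_basis_left b t
  suffices c = 0 by simp [this]
  ext i y
  have hy : Finsupp.linearCombination ℝ b
      (c.mapRange (fun g => g y) (LocallyConstant.zero_apply y)) = 0 := by
    ext x
    rw [Finsupp.linearCombination_apply, Finsupp.sum_mapRange_index fun i => zero_smul ℝ (b i)]
    simpa [Finsupp.sum, psiTensor_tmul, mul_comm] using congr($ht (x, y))
  exact congr($(linearIndependent_iff.1 b.linearIndependent _ hy) i)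

end Psi

section Slices

variable {X Y : Type*} [TopologicalSpace X] [TopologicalSpace Y] [CompactSpace Y]

noncomputable def LocallyConstant.curry {Z : Type*} (h : LocallyConstant (X × Y) Z) :
    LocallyConstant X (LocallyConstant Y Z) where
  toFun x := ⟨fun y => h (x, y), h.isLocallyConstant.comp_continuous (Continuous.prodMk_right x)⟩
  isLocallyConstant := by
    refine IsLocallyConstant.iff_exists_open _ |>.2 fun x => ?_
    have hopen : IsOpen {p : X × Y | h p = h (x, p.2)} :=
      h.isLocallyConstant.prodMk (h.isLocallyConstant.comp_continuous
        (continuous_const.prodMk continuous_snd)) {q | q.1 = q.2}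
    obtain ⟨U, V, hU, -, hxU, hV, hUV⟩ := generalized_tube_lemma (isCompact_singleton (x := x))
      isCompact_univ hopen fun p hp => show h p = h (x, p.2) by rw [← Set.mem_singleton_iff.1 hp.1]
    exact ⟨U, hU, hxU rfl, fun x' hx' => LocallyConstant.ext fun y => hUV ⟨hx', hV trivial⟩⟩

noncomputable def sliceIndicator (h : LocallyConstant (X × Y) ℝ) (k : LocallyConstant Y ℝ) :
    LocallyConstant X ℝ :=
  LocallyConstant.charFn ℝ (h.curry.isLocallyConstant.isClopen_fiber k)

open Classical in
lemma sliceIndicator_apply (h : LocallyConstant (X × Y) ℝ) (k : LocallyConstant Y ℝ) (x : X) :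
    sliceIndicator h k x = if h.curry x = k then 1 else 0 :=
  Set.indicator_apply _ _ _

lemma sliceIndicator_nonneg (h : LocallyConstant (X × Y) ℝ) (k : LocallyConstant Y ℝ) :
    0 ≤ sliceIndicator h k := fun x => by
  rw [sliceIndicator_apply]
  split_ifs <;> norm_num

lemma sliceIndicator_inf_eq_zero (h : LocallyConstant (X × Y) ℝ) {k l : LocallyConstant Y ℝ}
    (hkl : k ≠ l) : sliceIndicator h k ⊓ sliceIndicator h l = 0 :=
  LocallyConstant.ext fun x => by
    show min (sliceIndicator h k x) (sliceIndicator h l x) = 0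
    rw [sliceIndicator_apply, sliceIndicator_apply]
    split_ifs with hk hl <;> simp_all

variable [CompactSpace X]

noncomputable def slices (h : LocallyConstant (X × Y) ℝ) : Finset (LocallyConstant Y ℝ) :=
  h.curry.range_finite.toFinset

lemma sum_psi_sliceIndicator_apply (h : LocallyConstant (X × Y) ℝ)
    (v : LocallyConstant Y ℝ → LocallyConstant Y ℝ) (x : X) (y : Y) :
    (∑ k ∈ slices h, psi (sliceIndicator h k) (v k)) (x, y) = v (h.curry x) y := by
  rw [LocallyConstant.sum_apply, Finset.sum_eq_single_of_mem (h.curry x) (by simp [slices])]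
  · simp [sliceIndicator_apply]
  · intro k _ hk
    simp [sliceIndicator_apply, Ne.symm hk]

lemma sum_psi_sliceIndicator (h : LocallyConstant (X × Y) ℝ) :
    ∑ k ∈ slices h, psi (sliceIndicator h k) k = h :=
  LocallyConstant.ext fun p => sum_psi_sliceIndicator_apply h id p.1 p.2

lemma sum_psi_sliceIndicator_posPart (h : LocallyConstant (X × Y) ℝ) :
    ∑ k ∈ slices h, psi (sliceIndicator h k) k⁺ = h⁺ :=
  LocallyConstant.ext fun p => sum_psi_sliceIndicator_apply h (·⁺) p.1 p.2

lemma psiTensor_surjective : Function.Surjective (psiTensor X Y) := fun h =>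
  ⟨∑ k ∈ slices h, sliceIndicator h k ⊗ₜ k, by
    simp only [map_sum, psiTensor_tmul, sum_psi_sliceIndicator]⟩

lemma linearMap_ext_psi {M : Type*} [AddCommMonoid M] [Module ℝ M]
    {T₁ T₂ : LocallyConstant (X × Y) ℝ →ₗ[ℝ] M} (hT : ∀ f g, T₁ (psi f g) = T₂ (psi f g)) :
    T₁ = T₂ :=
  LinearMap.ext fun h => by
    rw [← sum_psi_sliceIndicator h, map_sum, map_sum]
    exact Finset.sum_congr rfl fun k _ => hT _ _

end Slices

section Lift

variable {X Y : Type*} [TopologicalSpace X] [TopologicalSpace Y] [CompactSpace X] [CompactSpace Y]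
  {H : Type*} [AddCommGroup H] [Module ℝ H]

variable (X Y) in
noncomputable def psiTensorEquiv :
    LocallyConstant X ℝ ⊗[ℝ] LocallyConstant Y ℝ ≃ₗ[ℝ] LocallyConstant (X × Y) ℝ :=
  LinearEquiv.ofBijective (psiTensor X Y) ⟨psiTensor_injective, psiTensor_surjective⟩

noncomputable def psiLift (φ : LocallyConstant X ℝ →ₗ[ℝ] LocallyConstant Y ℝ →ₗ[ℝ] H) :
    LocallyConstant (X × Y) ℝ →ₗ[ℝ] H :=
  TensorProduct.lift φ ∘ₗ (psiTensorEquiv X Y).symm.toLinearMap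

lemma psiLift_psi (φ : LocallyConstant X ℝ →ₗ[ℝ] LocallyConstant Y ℝ →ₗ[ℝ] H)
    (f : LocallyConstant X ℝ) (g : LocallyConstant Y ℝ) : psiLift φ (psi f g) = φ f g := by
  have : (psiTensorEquiv X Y).symm (psi f g) = f ⊗ₜ g :=
    (LinearEquiv.symm_apply_eq _).2 rfl
  simp [psiLift, this]

variable [Lattice H] [AddLeftMono H] {φ : LocallyConstant X ℝ →ₗ[ℝ] LocallyConstant Y ℝ →ₗ[ℝ] H}

lemma psiLift_posPart (hφ : IsRieszBimorphism φ) (h : LocallyConstant (X × Y) ℝ) :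
    psiLift φ h⁺ = (psiLift φ h)⁺ := by
  have hdisj : (slices h : Set (LocallyConstant Y ℝ)).Pairwise fun k l =>
      |φ (sliceIndicator h k) k| ⊓ |φ (sliceIndicator h l) l| = 0 := fun k _ l _ hkl =>
    hφ.abs_inf_abs_eq_zero (sliceIndicator_nonneg h k) (sliceIndicator_nonneg h l)
      (sliceIndicator_inf_eq_zero h hkl) k l
  calc psiLift φ h⁺ = ∑ k ∈ slices h, φ (sliceIndicator h k) k⁺ := by
        rw [← sum_psi_sliceIndicator_posPart h, map_sum]
        simp only [psiLift_psi]
    _ = ∑ k ∈ slices h, (φ (sliceIndicator h k) k)⁺ :=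
        Finset.sum_congr rfl fun k _ => hφ.map_posPart_right (sliceIndicator_nonneg h k) k
    _ = (∑ k ∈ slices h, φ (sliceIndicator h k) k)⁺ :=
        (posPart_sum_of_pairwise_abs_inf_eq_zero _ _ hdisj).symm
    _ = (psiLift φ h)⁺ := by
        conv_rhs => rw [← sum_psi_sliceIndicator h, map_sum]
        simp only [psiLift_psi]

lemma psiLift_sup (hφ : IsRieszBimorphism φ) (a b : LocallyConstant (X × Y) ℝ) :
    psiLift φ (a ⊔ b) = psiLift φ a ⊔ psiLift φ b :=
  map_sup_of_map_posPart _ (psiLift_posPart hφ) a b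

end Lift

theorem stmt0_general {X Y : Type*}
    [TopologicalSpace X] [CompactSpace X]
    [TopologicalSpace Y] [CompactSpace Y] :
    -- ψ is a Riesz bimorphism: it is bilinear ...
    ((∀ (f₁ f₂ : LocallyConstant X ℝ) (g : LocallyConstant Y ℝ),
        psi (f₁ + f₂) g = psi f₁ g + psi f₂ g) ∧
      (∀ (c : ℝ) (f : LocallyConstant X ℝ) (g : LocallyConstant Y ℝ),
        psi (c • f) g = c • psi f g) ∧
      (∀ (f : LocallyConstant X ℝ) (g₁ g₂ : LocallyConstant Y ℝ),
        psi f (g₁ + g₂) = psi f g₁ + psi f g₂) ∧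
      (∀ (c : ℝ) (f : LocallyConstant X ℝ) (g : LocallyConstant Y ℝ),
        psi f (c • g) = c • psi f g)) ∧
    -- ... and a lattice homomorphism in each variable against a positive element in the other
    (∀ (g : LocallyConstant Y ℝ), 0 ≤ g → ∀ (f₁ f₂ : LocallyConstant X ℝ),
        psi (f₁ ⊔ f₂) g = psi f₁ g ⊔ psi f₂ g) ∧
    (∀ (f : LocallyConstant X ℝ), 0 ≤ f → ∀ (g₁ g₂ : LocallyConstant Y ℝ),
        psi f (g₁ ⊔ g₂) = psi f g₁ ⊔ psi f g₂) ∧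
    -- universal property: for every Archimedean Riesz space `H` and every Riesz
    -- bimorphism `φ`, there is a unique Riesz homomorphism `T` with `T ∘ ψ = φ`.
    (∀ (H : Type u) [AddCommGroup H] [Lattice H] [Module ℝ H]
        [CovariantClass H H (· + ·) (· ≤ ·)] [PosSMulMono ℝ H],
      (∀ x y : H, 0 ≤ x → 0 ≤ y → (∀ n : ℕ, n • y ≤ x) → y = 0) →
      ∀ (φ : LocallyConstant X ℝ → LocallyConstant Y ℝ → H),
        (∀ f₁ f₂ g, φ (f₁ + f₂) g = φ f₁ g + φ f₂ g) →
        (∀ (c : ℝ) f g, φ (c • f) g = c • φ f g) →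
        (∀ f g₁ g₂, φ f (g₁ + g₂) = φ f g₁ + φ f g₂) →
        (∀ (c : ℝ) f g, φ f (c • g) = c • φ f g) →
        (∀ g, 0 ≤ g → ∀ f₁ f₂, φ (f₁ ⊔ f₂) g = φ f₁ g ⊔ φ f₂ g) →
        (∀ f, 0 ≤ f → ∀ g₁ g₂, φ f (g₁ ⊔ g₂) = φ f g₁ ⊔ φ f g₂) →
        ∃! T : LocallyConstant (X × Y) ℝ →ₗ[ℝ] H,
          (∀ a b, T (a ⊔ b) = T a ⊔ T b) ∧ ∀ f g, T (psi f g) = φ f g) := by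
  refine ⟨⟨psi_add_left, psi_smul_left, psi_add_right, psi_smul_right⟩,
    isRieszBimorphism_psiₗ.map_sup_left, isRieszBimorphism_psiₗ.map_sup_right, ?_⟩
  intro H _ _ _ _ _ _ φ hadd₁ hsmul₁ hadd₂ hsmul₂ hsup₁ hsup₂
  let Φ := LinearMap.mk₂ ℝ φ hadd₁ hsmul₁ hadd₂ hsmul₂
  have hΦ : IsRieszBimorphism Φ := ⟨hsup₁, hsup₂⟩
  exact ⟨psiLift Φ, ⟨psiLift_sup hΦ, psiLift_psi Φ⟩, fun T hT =>
    linearMap_ext_psi fun f g => (hT.2 f g).trans (psiLift_psi Φ f g).symm⟩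

theorem stmt0 {X Y : Type*}
    [TopologicalSpace X] [CompactSpace X] [T2Space X] [TotallyDisconnectedSpace X] [Nonempty X]
    [TopologicalSpace Y] [CompactSpace Y] [T2Space Y] [TotallyDisconnectedSpace Y] [Nonempty Y] :
    -- ψ is a Riesz bimorphism: it is bilinear ...
    ((∀ (f₁ f₂ : LocallyConstant X ℝ) (g : LocallyConstant Y ℝ),
        psi (f₁ + f₂) g = psi f₁ g + psi f₂ g) ∧
      (∀ (c : ℝ) (f : LocallyConstant X ℝ) (g : LocallyConstant Y ℝ),
        psi (c • f) g = c • psi f g) ∧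
      (∀ (f : LocallyConstant X ℝ) (g₁ g₂ : LocallyConstant Y ℝ),
        psi f (g₁ + g₂) = psi f g₁ + psi f g₂) ∧
      (∀ (c : ℝ) (f : LocallyConstant X ℝ) (g : LocallyConstant Y ℝ),
        psi f (c • g) = c • psi f g)) ∧
    -- ... and a lattice homomorphism in each variable against a positive element in the other
    (∀ (g : LocallyConstant Y ℝ), 0 ≤ g → ∀ (f₁ f₂ : LocallyConstant X ℝ),
        psi (f₁ ⊔ f₂) g = psi f₁ g ⊔ psi f₂ g) ∧
    (∀ (f : LocallyConstant X ℝ), 0 ≤ f → ∀ (g₁ g₂ : LocallyConstant Y ℝ),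
        psi f (g₁ ⊔ g₂) = psi f g₁ ⊔ psi f g₂) ∧
    -- universal property: for every Archimedean Riesz space `H` and every Riesz
    -- bimorphism `φ`, there is a unique Riesz homomorphism `T` with `T ∘ ψ = φ`.
    (∀ (H : Type u) [AddCommGroup H] [Lattice H] [Module ℝ H]
        [CovariantClass H H (· + ·) (· ≤ ·)] [PosSMulMono ℝ H],
      (∀ x y : H, 0 ≤ x → 0 ≤ y → (∀ n : ℕ, n • y ≤ x) → y = 0) →
      ∀ (φ : LocallyConstant X ℝ → LocallyConstant Y ℝ → H),
        (∀ f₁ f₂ g, φ (f₁ + f₂) g = φ f₁ g + φ f₂ g) →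
        (∀ (c : ℝ) f g, φ (c • f) g = c • φ f g) →
        (∀ f g₁ g₂, φ f (g₁ + g₂) = φ f g₁ + φ f g₂) →
        (∀ (c : ℝ) f g, φ f (c • g) = c • φ f g) →
        (∀ g, 0 ≤ g → ∀ f₁ f₂, φ (f₁ ⊔ f₂) g = φ f₁ g ⊔ φ f₂ g) →
        (∀ f, 0 ≤ f → ∀ g₁ g₂, φ f (g₁ ⊔ g₂) = φ f g₁ ⊔ φ f g₂) →
        ∃! T : LocallyConstant (X × Y) ℝ →ₗ[ℝ] H,
          (∀ a b, T (a ⊔ b) = T a ⊔ T b) ∧ ∀ f g, T (psi f g) = φ f g) :=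
  stmt0_general
end

section
/- Let X and Y be nonempty Stone spaces. Then the Boolean algebra Clopens(X×Y) of clopen subsets of the product space X×Y is complete (every subset has a supremum in Clopens(X×Y)) if and only if either [Clopens(X) is finite and Clopens(Y) is complete] or [Clopens(Y) is finite and Clopens(X) is complete]. (This resolves Fremlin's problem 315Y(f): for nontrivial Boolean algebras A and B, the free product A ⊗ B is complete if and only if one of A, B is finite and the other is complete.) -/
/-!
If `X` and `Y` are both infinite, pick pairwise disjoint nonempty clopens `Uₙ ⊆ X`, `Vₙ ⊆ Y`
and points `(xₙ, yₙ) ∈ Uₙ × Vₙ`. A clopen upper bound `s` of the boxes `Uₙ × Vₙ` contains a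
cluster point of `(xₙ, yₙ)`, hence an open box around it, hence some `(xₘ, yₖ)` with `m ≠ k`;
but `Uₘ × Vₖ` misses every `Uₙ × Vₙ`, so `s \ (Uₘ × Vₖ)` is a smaller upper bound.
Conversely, a Stone space with finitely many clopens is finite and discrete, and then
`Clopens (X × Y)` is the finite power `X → Clopens Y`. Completeness of each factor follows
because `Clopens X` is a monotone retract of `Clopens (X × Y)` (via `U ↦ U × Y` and a slice).
-/

open TopologicalSpace Set Filter Function

def HasAllLUBs (α : Type*) [Preorder α] : Prop :=
  ∀ S : Set α, ∃ s, IsLUB S s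

theorem HasAllLUBs.of_retraction {α β : Type*} [Preorder α] [Preorder β] {i : α → β}
    {r : β → α} (hi : Monotone i) (hr : Monotone r) (hri : LeftInverse r i)
    (h : HasAllLUBs β) : HasAllLUBs α := by
  intro S
  obtain ⟨s, hs⟩ := h (i '' S)
  refine ⟨r s, ?_, fun b hb => ?_⟩
  · simpa only [hri.image_image] using hr.mem_upperBounds_image hs.1
  · simpa only [hri b] using hr (hs.2 (hi.mem_upperBounds_image hb))

theorem HasAllLUBs.pi {ι α : Type*} [Preorder α] (h : HasAllLUBs α) :
    HasAllLUBs (ι → α) := by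
  intro S
  choose s hs using fun a => h (eval a '' S)
  exact ⟨s, isLUB_pi.2 hs⟩

theorem finite_of_finite_clopens {X : Type*} [TopologicalSpace X] [TotallySeparatedSpace X]
    [Finite (Clopens X)] : Finite X := by
  refine .of_injective (fun x => {U : Clopens X | x ∈ U}) fun a b hab => ?_
  by_contra hne
  obtain ⟨W, hW, haW, hbW⟩ := exists_isClopen_of_totally_separated hne
  exact hbW ((Set.ext_iff.1 hab ⟨W, hW⟩).1 haW)

namespace TopologicalSpace.Clopens

variable {X Y : Type*} [TopologicalSpace X] [TopologicalSpace Y]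

def comap {f : X → Y} (hf : Continuous f) : Clopens Y →o Clopens X where
  toFun W := ⟨f ⁻¹' W, W.isClopen.preimage hf⟩
  monotone' _ _ h _ hx := h hx

@[simp]
theorem mem_comap {f : X → Y} (hf : Continuous f) {W : Clopens Y} {x : X} :
    x ∈ comap hf W ↔ f x ∈ W :=
  .rfl

instance [Finite X] : Finite (Clopens X) :=
  .of_injective _ SetLike.coe_injective

theorem exists_seq_nonempty_pairwise_disjoint [CompactSpace X] [T2Space X]
    [TotallyDisconnectedSpace X] [Infinite X] :
    ∃ U : ℕ → Clopens X, (∀ n, (U n : Set X).Nonempty) ∧ Pairwise (Disjoint on U) := by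
  obtain ⟨O, hOinf, hOopen, hOdisj⟩ := exists_seq_infinite_isOpen_pairwise_disjoint X
  choose x hx using fun n => (hOinf n).nonempty
  choose U hU hxU hUO using fun n => compact_exists_isClopen_in_isOpen (hOopen n) (hx n)
  refine ⟨fun n => ⟨U n, hU n⟩, fun n => ⟨x n, hxU n⟩, fun m n hmn => ?_⟩
  exact coe_disjoint.1 ((hOdisj hmn).mono (hUO m) (hUO n))

theorem hasAllLUBs_of_hasAllLUBs_prod [Nonempty Y] (h : HasAllLUBs (Clopens (X × Y))) :
    HasAllLUBs (Clopens X) := by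
  obtain ⟨y⟩ := ‹Nonempty Y›
  refine h.of_retraction (i := fun U => U ×ˢ (⊤ : Clopens Y))
    (fun _ _ hUV => Set.prod_mono hUV subset_rfl) (comap (Continuous.prodMk_left y)).monotone
    fun _ => SetLike.ext fun _ => and_iff_left trivial

theorem hasAllLUBs_prod_comm (h : HasAllLUBs (Clopens (X × Y))) :
    HasAllLUBs (Clopens (Y × X)) :=
  h.of_retraction (comap continuous_swap).monotone (comap continuous_swap).monotone
    fun _ => rfl

theorem hasAllLUBs_prod_of_finite [Finite X] [DiscreteTopology X]
    (h : HasAllLUBs (Clopens Y)) : HasAllLUBs (Clopens (X × Y)) := by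
  let glue (f : X → Clopens Y) : Clopens (X × Y) :=
    ⟨⋃ a, {a} ×ˢ (f a : Set Y), isClopen_iUnion_of_finite fun a =>
      (isClopen_discrete {a}).prod (f a).isClopen⟩
  have glue_mono : Monotone glue := fun _ _ hfg =>
    iUnion_mono fun a => Set.prod_mono subset_rfl (hfg a)
  refine h.pi.of_retraction (i := fun W a => comap (Continuous.prodMk_right a) W)
    (fun _ _ hVW a => (comap _).monotone hVW) glue_mono fun W => ?_
  ext ⟨a, b⟩
  simp [glue]

end TopologicalSpace.Clopens

open TopologicalSpace.Clopens

section InfiniteFactors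

variable {X Y : Type*} [TopologicalSpace X] [TopologicalSpace Y] [CompactSpace X]
  [CompactSpace Y]

theorem IsClopen.exists_ne_prodMk_mem {W : Set (X × Y)} (hW : IsClopen W) {x : ℕ → X}
    {y : ℕ → Y} (hxy : ∀ n, (x n, y n) ∈ W) : ∃ m k, m ≠ k ∧ (x m, y k) ∈ W := by
  obtain ⟨z, hz⟩ := exists_clusterPt_of_compactSpace (map (fun n => (x n, y n)) atTop)
  have hzW : z ∈ W := hW.isClosed.mem_of_mapClusterPt hz (.of_forall hxy)
  obtain ⟨A, B, hA, hB, hzA, hzB, hABW⟩ := isOpen_prod_iff.1 hW.isOpen z.1 z.2 hzW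
  have hfreq : ∃ᶠ n in atTop, (x n, y n) ∈ A ×ˢ B :=
    mapClusterPt_iff_frequently.1 hz _ (prod_mem_nhds (hA.mem_nhds hzA) (hB.mem_nhds hzB))
  obtain ⟨m, hm, k, hk, hmk⟩ := (Nat.frequently_atTop_iff_infinite.1 hfreq).nontrivial
  exact ⟨m, k, hmk, hABW ⟨hm.1, hk.2⟩⟩

theorem not_isLUB_range_clopens_prod {U : ℕ → Clopens X} {V : ℕ → Clopens Y}
    (hUne : ∀ n, (U n : Set X).Nonempty) (hVne : ∀ n, (V n : Set Y).Nonempty)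
    (hU : Pairwise (Disjoint on U)) (hV : Pairwise (Disjoint on V)) (s : Clopens (X × Y)) :
    ¬IsLUB (range fun n => U n ×ˢ V n) s := by
  intro hs
  choose x hx using hUne
  choose y hy using hVne
  have hxy : ∀ n, (x n, y n) ∈ s := fun n => hs.1 (mem_range_self n) ⟨hx n, hy n⟩
  obtain ⟨m, k, hmk, hmks⟩ := s.isClopen.exists_ne_prodMk_mem hxy
  have hsub : s \ U m ×ˢ V k ∈ upperBounds (range fun n => U n ×ˢ V n) := by
    rintro _ ⟨n, rfl⟩
    refine le_sdiff.2 ⟨hs.1 (mem_range_self n), coe_disjoint.1 (disjoint_prod.2 ?_)⟩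
    by_cases hnm : n = m
    · exact .inr (coe_disjoint.2 (hV (hnm ▸ hmk)))
    · exact .inl (coe_disjoint.2 (hU hnm))
  exact (hs.2 hsub hmks).2 ⟨hx m, hy k⟩

variable [T2Space X] [TotallyDisconnectedSpace X] [T2Space Y] [TotallyDisconnectedSpace Y]

theorem finite_clopens_or_finite_clopens_of_hasAllLUBs_prod
    (h : HasAllLUBs (Clopens (X × Y))) :
    Finite (Clopens X) ∨ Finite (Clopens Y) := by
  rcases finite_or_infinite X with hX | hX
  · exact .inl inferInstance
  rcases finite_or_infinite Y with hY | hY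
  · exact .inr inferInstance
  obtain ⟨U, hUne, hU⟩ := exists_seq_nonempty_pairwise_disjoint (X := X)
  obtain ⟨V, hVne, hV⟩ := exists_seq_nonempty_pairwise_disjoint (X := Y)
  obtain ⟨s, hs⟩ := h (range fun n => U n ×ˢ V n)
  exact (not_isLUB_range_clopens_prod hUne hVne hU hV s hs).elim

end InfiniteFactors

theorem stmt5 {X Y : Type*}
    [TopologicalSpace X] [CompactSpace X] [T2Space X] [TotallyDisconnectedSpace X] [Nonempty X]
    [TopologicalSpace Y] [CompactSpace Y] [T2Space Y] [TotallyDisconnectedSpace Y] [Nonempty Y] :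
    (∀ S : Set (Clopens (X × Y)), ∃ s : Clopens (X × Y), IsLUB S s) ↔
      (Finite (Clopens X) ∧ ∀ S : Set (Clopens Y), ∃ s : Clopens Y, IsLUB S s) ∨
      (Finite (Clopens Y) ∧ ∀ S : Set (Clopens X), ∃ s : Clopens X, IsLUB S s) := by
  constructor
  · intro h
    have hX : HasAllLUBs (Clopens X) := hasAllLUBs_of_hasAllLUBs_prod h
    have hY : HasAllLUBs (Clopens Y) := hasAllLUBs_of_hasAllLUBs_prod (hasAllLUBs_prod_comm h)
    exact (finite_clopens_or_finite_clopens_of_hasAllLUBs_prod h).imp (⟨·, hY⟩) (⟨·, hX⟩)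
  · rintro (⟨hfin, hY⟩ | ⟨hfin, hX⟩)
    · have : Finite X := finite_of_finite_clopens
      exact hasAllLUBs_prod_of_finite hY
    · have : Finite Y := finite_of_finite_clopens
      exact hasAllLUBs_prod_comm (hasAllLUBs_prod_of_finite hX)
end

section
/- Let E be an infinite-dimensional Archimedean Riesz space. Then there exists a sequence (x_n) of nonzero elements of E that are pairwise disjoint (|x_i| ∧ |x_j| = 0 for i ≠ j), and the corresponding principal bands {x_n}⊥⊥ are pairwise distinct; in particular, the collection of subsets of E of the form {x}⊥⊥ with x ∈ E is infinite, so the Boolean algebra of bands of E is not finite. -/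
/-- The disjoint complement `S⊥ = {y : ∀ s ∈ S, |y| ⊓ |s| = 0}` of a subset of a
Riesz space. -/
def disjComplement {E : Type*} [Lattice E] [AddCommGroup E] (S : Set E) : Set E :=
  {y : E | ∀ s ∈ S, |y| ⊓ |s| = 0}

/-!
Suppose `E` has no infinite sequence of pairwise disjoint nonzero elements. Then every nonzero
principal band contains some `a > 0` whose principal band `{a}⊥⊥` is totally ordered: otherwise
splitting incomparable elements into positive and negative parts could go on forever. A greedy
choice then gives finitely many such `a` with `{a, …}⊥ = 0`. By the Archimedean property each
such `{a}⊥⊥` is a projection band onto `ℝ a` (for `p ≥ 0` and `μ = sup {c | c • a ≤ p}`, the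
remainder `p - μ • a` is disjoint from `a`), so projecting successively onto these `a` shows that
they span `E`. Finally, nonzero pairwise disjoint elements have distinct principal bands.
-/

open LatticeOrderedAddCommGroup

section LatticeOrderedGroup

variable {E : Type*} [Lattice E] [AddCommGroup E]

lemma pairwise_abs_inf_eq_zero_of_lt {x : ℕ → E} (h : ∀ m n, m < n → |x m| ⊓ |x n| = 0) :
    Pairwise fun i j => |x i| ⊓ |x j| = 0 := fun i j hij =>
  hij.lt_or_gt.elim (h i j) fun hji => (inf_comm _ _).trans (h j i hji)

lemma disjComplement_anti {S T : Set E} (h : S ⊆ T) : disjComplement T ⊆ disjComplement S :=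
  fun _ hy s hs => hy s (h hs)

def principalBand (x : E) : Set E := disjComplement (disjComplement {x})

lemma mem_principalBand_self (x : E) : x ∈ principalBand x := fun s hs => by
  rw [inf_comm]; exact hs x rfl

lemma principalBand_subset {S : Set E} {x : E} (hx : x ∈ disjComplement S) :
    principalBand x ⊆ disjComplement S :=
  disjComplement_anti fun s hs t ht => by rw [ht, inf_comm]; exact hx s hs

variable [AddLeftMono E]

lemma eq_zero_of_abs_eq_zero {a : E} (h : |a| = 0) : a = 0 :=
  le_antisymm (h ▸ le_abs_self a) (neg_nonpos.1 (h ▸ neg_le_abs a))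

lemma add_inf_eq_zero_s9 {a b c : E} (ha : 0 ≤ a) (hb : 0 ≤ b) (hc : 0 ≤ c)
    (hac : a ⊓ c = 0) (hbc : b ⊓ c = 0) : (a + b) ⊓ c = 0 := by
  refine le_antisymm ?_ (le_inf (add_nonneg ha hb) hc)
  calc (a + b) ⊓ c ≤ (a + b) ⊓ (a + c) ⊓ c :=
        le_inf (inf_le_inf_left _ (le_add_of_nonneg_left ha)) inf_le_right
    _ = a ⊓ c := by rw [← add_inf, hbc, add_zero]
    _ = 0 := hac

lemma isSolid_disjComplement (S : Set E) : IsSolid (disjComplement S) :=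
  fun _ hx _ hyx s hs =>
    le_antisymm ((inf_le_inf_right _ hyx).trans_eq (hx s hs)) (le_inf (abs_nonneg _) (abs_nonneg _))

lemma add_mem_disjComplement {S : Set E} {x y : E} (hx : x ∈ disjComplement S)
    (hy : y ∈ disjComplement S) : x + y ∈ disjComplement S := fun s hs =>
  le_antisymm ((inf_le_inf_right _ (abs_add_le x y)).trans_eq
      (add_inf_eq_zero_s9 (abs_nonneg x) (abs_nonneg y) (abs_nonneg s) (hx s hs) (hy s hs)))
    (le_inf (abs_nonneg _) (abs_nonneg _))

lemma sub_mem_disjComplement {S : Set E} {x y : E} (hx : x ∈ disjComplement S)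
    (hy : y ∈ disjComplement S) : x - y ∈ disjComplement S :=
  sub_eq_add_neg x y ▸ add_mem_disjComplement hx (isSolid_disjComplement S hy (abs_neg y).le)

lemma eq_zero_of_mem_of_mem_disjComplement {S : Set E} {x : E} (hxS : x ∈ S)
    (hx : x ∈ disjComplement S) : x = 0 :=
  eq_zero_of_abs_eq_zero (by simpa using hx x hxS)

lemma principalBand_abs (x : E) : principalBand |x| = principalBand x := by
  simp [principalBand, disjComplement, abs_abs]

lemma injective_principalBand {ι : Type*} {x : ι → E} (hx0 : ∀ i, x i ≠ 0)
    (hx : Pairwise fun i j => |x i| ⊓ |x j| = 0) :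
    Function.Injective fun i => principalBand (x i) := by
  intro i j (hij : principalBand (x i) = principalBand (x j))
  by_contra hne
  refine hx0 i (eq_zero_of_mem_of_mem_disjComplement (S := disjComplement {x j}) ?_ ?_)
  · rintro s rfl; exact hx hne
  · exact (hij ▸ mem_principalBand_self (x i) : x i ∈ principalBand (x j))

lemma exists_disjoint_of_not_isChain {e : E} (h : ¬IsChain (· ≤ ·) (principalBand e)) :
    ∃ u v : E, u ≠ 0 ∧ v ≠ 0 ∧ u ∈ principalBand e ∧ v ∈ principalBand e ∧ |u| ⊓ |v| = 0 := by
  obtain ⟨b, hb, c, hc, -, hbc, hcb⟩ :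
      ∃ b ∈ principalBand e, ∃ c ∈ principalBand e, b ≠ c ∧ ¬b ≤ c ∧ ¬c ≤ b := by
    simpa [IsChain, Set.Pairwise] using h
  have hsub : b - c ∈ principalBand e := sub_mem_disjComplement hb hc
  have hpos : (b - c)⁺ ≤ |b - c| :=
    (le_add_of_nonneg_right (negPart_nonneg _)).trans_eq (posPart_add_negPart _)
  have hneg : (b - c)⁻ ≤ |b - c| :=
    (le_add_of_nonneg_left (posPart_nonneg _)).trans_eq (posPart_add_negPart _)
  refine ⟨(b - c)⁺, (b - c)⁻, ?_, ?_, isSolid_disjComplement _ hsub ?_,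
    isSolid_disjComplement _ hsub ?_, ?_⟩
  · rwa [Ne, posPart_eq_zero, sub_nonpos]
  · rwa [Ne, negPart_eq_zero, sub_nonneg]
  · rwa [abs_of_nonneg (posPart_nonneg _)]
  · rwa [abs_of_nonneg (negPart_nonneg _)]
  · rw [abs_of_nonneg (posPart_nonneg _), abs_of_nonneg (negPart_nonneg _)]
    exact posPart_inf_negPart_eq_zero _

lemma exists_pairwise_disjoint_of_forall_not_isChain {d : E} (hd : d ≠ 0)
    (h : ∀ e ∈ principalBand d, e ≠ 0 → ¬IsChain (· ≤ ·) (principalBand e)) :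
    ∃ x : ℕ → E, (∀ n, x n ≠ 0) ∧ Pairwise fun i j => |x i| ⊓ |x j| = 0 := by
  have split : ∀ e : {e // e ∈ principalBand d ∧ e ≠ 0},
      ∃ u : {e // e ∈ principalBand d ∧ e ≠ 0}, ∃ v : E, v ≠ 0 ∧
        (u : E) ∈ principalBand (e : E) ∧ v ∈ principalBand (e : E) ∧ |(u : E)| ⊓ |v| = 0 := by
    rintro ⟨e, he, he0⟩
    obtain ⟨u, v, hu0, hv0, hu, hv, huv⟩ := exists_disjoint_of_not_isChain (h e he he0)
    exact ⟨⟨u, principalBand_subset he hu, hu0⟩, v, hv0, hu, hv, huv⟩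
  choose next sib hsib0 hnext hsib hdisj using split
  -- `F (n + 1)` and `sib (F n)` are disjoint nonzero elements of `{F n}⊥⊥`.
  let F n := next^[n] ⟨d, mem_principalBand_self d, hd⟩
  have hF : Antitone fun n => principalBand (F n : E) := antitone_nat_of_succ_le fun n => by
    simp only [F, Function.iterate_succ_apply']
    exact principalBand_subset (hnext _)
  refine ⟨fun n => sib (F n), fun n => hsib0 _, pairwise_abs_inf_eq_zero_of_lt fun i j hij => ?_⟩
  have hnext_disj : (F (i + 1) : E) ∈ disjComplement {sib (F i)} := by
    rintro s rfl
    simpa only [F, Function.iterate_succ_apply'] using hdisj (F i)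
  rw [inf_comm]
  exact principalBand_subset hnext_disj (hF hij (hsib (F j))) _ rfl

lemma exists_pos_isChain_mem_principalBand
    (hno : ¬∃ x : ℕ → E, (∀ n, x n ≠ 0) ∧ Pairwise fun i j => |x i| ⊓ |x j| = 0)
    {d : E} (hd : d ≠ 0) :
    ∃ e ∈ principalBand d, 0 < e ∧ IsChain (· ≤ ·) (principalBand e) := by
  by_contra! h
  refine hno (exists_pairwise_disjoint_of_forall_not_isChain hd fun e he he0 hchain => ?_)
  refine h |e| (isSolid_disjComplement _ he (abs_abs e).le)
    ((abs_nonneg e).lt_of_ne' (mt eq_zero_of_abs_eq_zero he0)) ?_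
  rwa [principalBand_abs]

lemma exists_finset_isChain_disjComplement_eq_zero
    (hno : ¬∃ x : ℕ → E, (∀ n, x n ≠ 0) ∧ Pairwise fun i j => |x i| ⊓ |x j| = 0) :
    ∃ S : Finset E, (∀ a ∈ S, 0 < a ∧ IsChain (· ≤ ·) (principalBand a)) ∧
      ∀ z ∈ disjComplement (S : Set E), z = 0 := by
  by_contra! h
  obtain ⟨x, hx, hdisj⟩ := exists_seq_of_forall_finset_exists
    (fun a : E => 0 < a ∧ IsChain (· ≤ ·) (principalBand a)) (fun a b => |a| ⊓ |b| = 0)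
    fun S hS => by
      obtain ⟨z, hz, hz0⟩ := h S hS
      obtain ⟨e, he, he0, hchain⟩ := exists_pos_isChain_mem_principalBand hno hz0
      exact ⟨e, ⟨he0, hchain⟩, fun a ha => (inf_comm _ _).trans (principalBand_subset hz he a ha)⟩
  exact hno ⟨x, fun n => (hx n).1.ne', pairwise_abs_inf_eq_zero_of_lt hdisj⟩

end LatticeOrderedGroup

section Archimedean

variable {E : Type*} [Lattice E] [AddCommGroup E] [IsOrderedAddMonoid E] [Module ℝ E]
  [PosSMulMono ℝ E]

lemma eq_zero_of_forall_le_inv_smul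
    (arch : ∀ x y : E, 0 ≤ x → 0 ≤ y → (∀ n : ℕ, n • y ≤ x) → y = 0)
    {w a : E} (hw : 0 ≤ w) (ha : 0 ≤ a) (h : ∀ n : ℕ, w ≤ ((n : ℝ) + 1)⁻¹ • a) : w = 0 :=
  arch a w ha hw fun n => calc
    n • w ≤ (n + 1) • w := nsmul_le_nsmul_left hw n.le_succ
    _ = ((n : ℝ) + 1) • w := by rw [← Nat.cast_smul_eq_nsmul ℝ]; push_cast; rfl
    _ ≤ ((n : ℝ) + 1) • ((n : ℝ) + 1)⁻¹ • a := smul_le_smul_of_nonneg_left (h n) (by positivity)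
    _ = a := by rw [smul_smul, mul_inv_cancel₀ (by positivity), one_smul]

lemma smul_le_of_forall_lt_smul_le
    (arch : ∀ x y : E, 0 ≤ x → 0 ≤ y → (∀ n : ℕ, n • y ≤ x) → y = 0)
    {a p : E} {l : ℝ} (ha : 0 ≤ a) (h : ∀ c < l, c • a ≤ p) : l • a ≤ p := by
  have hpos : (l • a - p)⁺ = 0 := by
    refine eq_zero_of_forall_le_inv_smul arch (posPart_nonneg _) ha fun n => ?_
    have hε : (0 : ℝ) < ((n : ℝ) + 1)⁻¹ := by positivity
    refine (posPart_def _).trans_le (sup_le ?_ (smul_nonneg hε.le ha))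
    calc l • a - p ≤ l • a - (l - ((n : ℝ) + 1)⁻¹) • a := sub_le_sub_left (h _ (by linarith)) _
      _ = ((n : ℝ) + 1)⁻¹ • a := by rw [sub_smul]; abel
  exact sub_nonpos.1 (posPart_eq_zero.1 hpos)

lemma exists_smul_le_sub_smul_mem_disjComplement
    (arch : ∀ x y : E, 0 ≤ x → 0 ≤ y → (∀ n : ℕ, n • y ≤ x) → y = 0)
    {a p : E} (ha : 0 < a) (hchain : IsChain (· ≤ ·) (principalBand a)) (hp : 0 ≤ p) :
    ∃ μ : ℝ, μ • a ≤ p ∧ p - μ • a ≤ p ∧ p - μ • a ∈ disjComplement {a} := by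
  set T := {c : ℝ | c • a ≤ p}
  have hT0 : (0 : ℝ) ∈ T := by simpa [T] using hp
  have hbdd : BddAbove T := by
    by_contra hT
    refine ha.ne' (arch p a hp ha.le fun n => ?_)
    obtain ⟨c, hc, hnc⟩ := not_bddAbove_iff.1 hT n
    rw [← Nat.cast_smul_eq_nsmul ℝ]
    exact (smul_le_smul_of_nonneg_right hnc.le ha.le).trans hc
  set l := sSup T
  have hl : l • a ≤ p := smul_le_of_forall_lt_smul_le arch ha.le fun c hc => by
    obtain ⟨c', hc', hcc'⟩ := exists_lt_of_lt_csSup ⟨0, hT0⟩ hc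
    exact (smul_le_smul_of_nonneg_right hcc'.le ha.le).trans hc'
  refine ⟨l, hl, sub_le_self _ (smul_nonneg (le_csSup hbdd hT0) ha.le), ?_⟩
  intro s hs
  rw [Set.mem_singleton_iff.1 hs, abs_of_nonneg (sub_nonneg.2 hl), abs_of_pos ha]
  have hw : 0 ≤ (p - l • a) ⊓ a := le_inf (sub_nonneg.2 hl) ha.le
  refine eq_zero_of_forall_le_inv_smul arch hw ha.le fun n => ?_
  have hε : (0 : ℝ) < ((n : ℝ) + 1)⁻¹ := by positivity
  have hε1 : ((n : ℝ) + 1)⁻¹ ≤ 1 := inv_le_one_of_one_le₀ (by linarith [n.cast_nonneg (α := ℝ)])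
  have hwband : (p - l • a) ⊓ a ∈ principalBand a :=
    isSolid_disjComplement _ (mem_principalBand_self a) <| by
      rw [abs_of_nonneg hw, abs_of_pos ha]; exact inf_le_right
  have hεband : ((n : ℝ) + 1)⁻¹ • a ∈ principalBand a :=
    isSolid_disjComplement _ (mem_principalBand_self a) <| by
      rw [abs_of_nonneg (smul_nonneg hε.le ha.le), abs_of_pos ha]
      exact smul_le_of_le_one_left ha.le hε1
  -- A multiple `ε • a` below the remainder would put `l + ε` into `T`.
  refine (hchain.total hwband hεband).resolve_right fun hle => ?_
  have : l + ((n : ℝ) + 1)⁻¹ ∈ T := calc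
    (l + ((n : ℝ) + 1)⁻¹) • a = l • a + ((n : ℝ) + 1)⁻¹ • a := add_smul _ _ _
    _ ≤ l • a + (p - l • a) := add_le_add_right (hle.trans inf_le_left) _
    _ = p := add_sub_cancel _ _
  linarith [le_csSup hbdd this]

lemma exists_abs_sub_smul_le_mem_disjComplement
    (arch : ∀ x y : E, 0 ≤ x → 0 ≤ y → (∀ n : ℕ, n • y ≤ x) → y = 0)
    {a : E} (ha : 0 < a) (hchain : IsChain (· ≤ ·) (principalBand a)) (y : E) :
    ∃ μ : ℝ, |y - μ • a| ≤ |y| ∧ y - μ • a ∈ disjComplement {a} := by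
  obtain ⟨μ₁, h₁, h₁y, h₁a⟩ :=
    exists_smul_le_sub_smul_mem_disjComplement arch ha hchain (posPart_nonneg y)
  obtain ⟨μ₂, h₂, h₂y, h₂a⟩ :=
    exists_smul_le_sub_smul_mem_disjComplement arch ha hchain (negPart_nonneg y)
  have hy : y - (μ₁ - μ₂) • a = (y⁺ - μ₁ • a) - (y⁻ - μ₂ • a) := by
    conv_lhs => rw [← posPart_sub_negPart y]
    rw [sub_smul]; abel
  refine ⟨μ₁ - μ₂, ?_, hy ▸ sub_mem_disjComplement h₁a h₂a⟩
  rw [hy]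
  calc |(y⁺ - μ₁ • a) - (y⁻ - μ₂ • a)|
      ≤ |y⁺ - μ₁ • a| + |-(y⁻ - μ₂ • a)| := by rw [sub_eq_add_neg]; exact abs_add_le _ _
    _ = (y⁺ - μ₁ • a) + (y⁻ - μ₂ • a) := by
      rw [abs_neg, abs_of_nonneg (sub_nonneg.2 h₁), abs_of_nonneg (sub_nonneg.2 h₂)]
    _ ≤ y⁺ + y⁻ := add_le_add h₁y h₂y
    _ = |y| := posPart_add_negPart y

lemma exists_mem_span_sub_mem_disjComplement
    (arch : ∀ x y : E, 0 ≤ x → 0 ≤ y → (∀ n : ℕ, n • y ≤ x) → y = 0)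
    (S : Finset E) (hS : ∀ a ∈ S, 0 < a ∧ IsChain (· ≤ ·) (principalBand a)) (y : E) :
    ∃ s ∈ Submodule.span ℝ (S : Set E), y - s ∈ disjComplement (S : Set E) := by
  classical
  induction S using Finset.induction_on with
  | empty => exact ⟨0, zero_mem _, by simp [disjComplement]⟩
  | insert a S _ ih =>
    obtain ⟨s, hs, hyS⟩ := ih fun b hb => hS b (Finset.mem_insert_of_mem hb)
    obtain ⟨ha, hchain⟩ := hS a (Finset.mem_insert_self a S)
    obtain ⟨μ, hle, hya⟩ := exists_abs_sub_smul_le_mem_disjComplement arch ha hchain (y - s)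
    refine ⟨s + μ • a, ?_, ?_⟩
    · rw [Finset.coe_insert]
      exact add_mem (Submodule.span_mono (Set.subset_insert _ _) hs)
        (Submodule.smul_mem _ _ (Submodule.subset_span (Set.mem_insert a _)))
    · rw [← sub_sub, Finset.coe_insert]
      rintro t (rfl | ht)
      · exact hya t rfl
      · exact isSolid_disjComplement _ hyS hle t ht

lemma finiteDimensional_of_disjComplement_eq_zero
    (arch : ∀ x y : E, 0 ≤ x → 0 ≤ y → (∀ n : ℕ, n • y ≤ x) → y = 0)
    (S : Finset E) (hS : ∀ a ∈ S, 0 < a ∧ IsChain (· ≤ ·) (principalBand a))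
    (hS0 : ∀ z ∈ disjComplement (S : Set E), z = 0) : FiniteDimensional ℝ E := by
  refine ⟨S, eq_top_iff.2 fun y _ => ?_⟩
  obtain ⟨s, hs, hys⟩ := exists_mem_span_sub_mem_disjComplement arch S hS y
  rwa [sub_eq_zero.1 (hS0 _ hys)]

theorem exists_pairwise_disjoint_of_not_finiteDimensional
    (arch : ∀ x y : E, 0 ≤ x → 0 ≤ y → (∀ n : ℕ, n • y ≤ x) → y = 0)
    (hinf : ¬FiniteDimensional ℝ E) :
    ∃ x : ℕ → E, (∀ n, x n ≠ 0) ∧ Pairwise fun i j => |x i| ⊓ |x j| = 0 := by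
  by_contra hno
  obtain ⟨S, hS, hS0⟩ := exists_finset_isChain_disjComplement_eq_zero hno
  exact hinf (finiteDimensional_of_disjComplement_eq_zero arch S hS hS0)

end Archimedean

theorem stmt9 {E : Type*} [Lattice E] [AddCommGroup E] [Module ℝ E]
    [CovariantClass E E (· + ·) (· ≤ ·)] [PosSMulMono ℝ E]
    (arch : ∀ x y : E, 0 ≤ x → 0 ≤ y → (∀ n : ℕ, n • y ≤ x) → y = 0)
    (hinf : ¬ FiniteDimensional ℝ E) :
    ∃ x : ℕ → E,
      (∀ n, x n ≠ 0) ∧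
      (∀ i j, i ≠ j → |x i| ⊓ |x j| = 0) ∧
      (Function.Injective fun n => disjComplement (disjComplement ({x n} : Set E))) ∧
      Set.Infinite {B : Set E | ∃ v : E, B = disjComplement (disjComplement ({v} : Set E))} := by
  have : IsOrderedAddMonoid E := { add_le_add_left := fun _ _ h c => add_le_add_left h c }
  obtain ⟨x, hx0, hx⟩ := exists_pairwise_disjoint_of_not_finiteDimensional arch hinf
  have hinj : Function.Injective fun n => principalBand (x n) := injective_principalBand hx0 hx
  exact ⟨x, hx0, fun i j hij => hx hij, hinj,
    Set.infinite_of_injective_forall_mem hinj fun n => ⟨x n, rfl⟩⟩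
end
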